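/- Let α > 1 be irrational and S_α the set avoided by the partition {A_α, B_α}. If p ∈ S_α, then p is either the numerator of a convergent of α, twice the numerator of a convergent, or the numerator p_{n-1} + k·p_n (1 ≤ k < a_{n+1}) of an intermediate fraction of α. -/

import Mathlib

/-- `E α n` is the error `n - qα` where `qα` is the integer multiple of `α`
nearest to `n` (for `α > 1`, this multiple is `round (n/α) * α`). -/
noncomputable def E (α : ℝ) (n : ℕ) : ℝ := (n : ℝ) - round ((n : ℝ) / α) * α

/-- `A_α`: positive integers whose nearest multiple of `α` exceeds them. -/
def Aset (α : ℝ) : Set ℕ := {n | 0 < n ∧ E α n < 0}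

/-- `B_α`: positive integers whose nearest multiple of `α` is below them. -/
def Bset (α : ℝ) : Set ℕ := {n | 0 < n ∧ 0 < E α n}

/-- `S_α`: positive integers not expressible as a sum of two distinct elements
of `A_α` nor of two distinct elements of `B_α`. -/
def Sset (α : ℝ) : Set ℕ :=
  {s | 0 < s ∧ (∀ x ∈ Aset α, ∀ y ∈ Aset α, x ≠ y → x + y ≠ s) ∧
       (∀ x ∈ Bset α, ∀ y ∈ Bset α, x ≠ y → x + y ≠ s)}
/-- Data of the continued fraction expansion `α = [a 0; a 1, a 2, ...]` of an
irrational `α > 1`, with `t n` the successive complete quotients, and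
`p n / q n` the convergents. -/
structure CF (α : ℝ) where
  a : ℕ → ℕ
  t : ℕ → ℝ
  p : ℕ → ℕ
  q : ℕ → ℕ
  t0 : t 0 = α
  ha : ∀ n, 1 ≤ a n
  floor_t : ∀ n, (a n : ℝ) = ⌊t n⌋
  t_rec : ∀ n, t n = a n + 1 / t (n + 1)
  p0 : p 0 = a 0
  p1 : p 1 = a 1 * a 0 + 1
  p_rec : ∀ n, p (n + 2) = a (n + 2) * p (n + 1) + p n
  q0 : q 0 = 1
  q1 : q 1 = a 1
  q_rec : ∀ n, q (n + 2) = a (n + 2) * q (n + 1) + q n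

/-- The numerators extended by two initial terms: `P 0 = p_{-2} = 0`,
`P 1 = p_{-1} = 1`, and `P (n+2) = p n`. -/
def CF.P {α : ℝ} (c : CF α) : ℕ → ℕ
  | 0 => 0
  | 1 => 1
  | n + 2 => c.p n


/-!
Put `β = 1/α`. For `x > 0`, `x ∈ B_α` iff `{xβ} < 1/2`, and `x ∈ A_α` iff `{-xβ} < 1/2`.
If `p ∈ S_α` and, say, `{pβ} < 1/2`, then `{pβ} < {xβ}` for every `0 < x < p` with `2x ≠ p`:
otherwise `{(p - x)β} = {pβ} - {xβ} < 1/2` as well. So either `p` is a record minimum of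
`x ↦ {xβ}`, or `p = 2s` where `{sβ}` is below `{xβ}` for every other `0 < x < 2s`.

The record minima of `{xβ}` (of `{-xβ}`) are the intermediate numerators
`X = p_{m-2} + k p_{m-1}`, `k < a_m`, with `m` odd (even). Indeed `(X, ·)` and `(p_{m-1}, ·)`
form a basis of `ℤ²` on which `(x, y) ↦ ±(xβ - y)` takes values of opposite signs, and writing
`X < x < X + p_{m-1}` in this basis shows `{±xβ} > {±Xβ}`. In the doubled case `s = X`, and
`k ≥ 1` is impossible because then `X + p_{m-1} < 2s` beats `s`.
-/

theorem Int.fract_le_sub_of_le {z : ℝ} {n : ℤ} (h : (n : ℝ) ≤ z) : Int.fract z ≤ z - n := by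
  have : (n : ℝ) ≤ ⌊z⌋ := by exact_mod_cast Int.le_floor.2 h
  rw [← Int.self_sub_floor]
  linarith

theorem Int.fract_sub_of_fract_le {a b : ℝ} (h : Int.fract b ≤ Int.fract a) :
    Int.fract (a - b) = Int.fract a - Int.fract b := by
  refine Int.fract_eq_iff.2 ⟨by linarith, by linarith [Int.fract_lt_one a, Int.fract_nonneg b],
    ⌊a⌋ - ⌊b⌋, ?_⟩
  rw [← Int.self_sub_floor, ← Int.self_sub_floor]
  push_cast
  ring

theorem Irrational.fract_pos {z : ℝ} (h : Irrational z) : 0 < Int.fract z :=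
  Int.fract_pos.2 (h.ne_int _)

theorem E_eq {α : ℝ} (hα : 0 < α) (n : ℕ) : E α n = α * (n / α - round ((n : ℝ) / α)) := by
  rw [E]
  field_simp

theorem mem_Bset_of_fract_lt {α : ℝ} (hα : 0 < α) {n : ℕ} (hn : 0 < n)
    (hirr : Irrational (n / α)) (h : Int.fract ((n : ℝ) / α) < 1 / 2) : n ∈ Bset α := by
  have hround : round ((n : ℝ) / α) = ⌊(n : ℝ) / α⌋ := by
    rw [round_eq_iff, ← Int.self_sub_floor] at *
    constructor <;> linarith [Int.floor_le ((n : ℝ) / α)]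
  refine ⟨hn, ?_⟩
  rw [E_eq hα, hround, Int.self_sub_floor]
  exact mul_pos hα hirr.fract_pos

theorem mem_Aset_of_fract_neg_lt {α : ℝ} (hα : 0 < α) {n : ℕ} (hn : 0 < n)
    (hirr : Irrational (n / α)) (h : Int.fract (-((n : ℝ) / α)) < 1 / 2) : n ∈ Aset α := by
  have hfract := Int.self_sub_floor (-((n : ℝ) / α))
  have hround : round ((n : ℝ) / α) = -⌊-((n : ℝ) / α)⌋ := by
    rw [round_eq_iff]
    push_cast
    constructor <;> linarith [Int.fract_nonneg (-((n : ℝ) / α))]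
  refine ⟨hn, ?_⟩
  rw [E_eq hα, hround]
  push_cast
  nlinarith [hirr.neg.fract_pos]

def IsFractRecord (γ : ℝ) (p : ℕ) : Prop :=
  ∀ x : ℕ, 0 < x → x < p → Int.fract (p * γ) < Int.fract (x * γ)

def AvoidsLowerHalf (γ : ℝ) (p : ℕ) : Prop :=
  ∀ x y : ℕ, 0 < x → 0 < y → x ≠ y → x + y = p →
    ¬(Int.fract (x * γ) < 1 / 2 ∧ Int.fract (y * γ) < 1 / 2)

section AvoidsLowerHalf

variable {γ : ℝ} {p : ℕ}

theorem AvoidsLowerHalf.fract_lt (h : AvoidsLowerHalf γ p) (hp : Int.fract (p * γ) < 1 / 2)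
    {x : ℕ} (hx0 : 0 < x) (hxp : x < p) (h2x : 2 * x ≠ p) :
    Int.fract (p * γ) < Int.fract (x * γ) := by
  by_contra! hle
  have hsub : Int.fract (((p - x : ℕ) : ℝ) * γ) = Int.fract (p * γ) - Int.fract (x * γ) := by
    rw [Nat.cast_sub hxp.le, sub_mul, Int.fract_sub_of_fract_le hle]
  exact h x (p - x) hx0 (by omega) (by omega) (by omega)
    ⟨by linarith, by linarith [Int.fract_nonneg ((x : ℝ) * γ)]⟩

theorem AvoidsLowerHalf.isFractRecord_or_double (h : AvoidsLowerHalf γ p)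
    (hp : Int.fract (p * γ) < 1 / 2) :
    IsFractRecord γ p ∨
      ∃ s, p = 2 * s ∧
        ∀ x : ℕ, 0 < x → x < p → x ≠ s → Int.fract (s * γ) < Int.fract (x * γ) := by
  by_cases hrec : IsFractRecord γ p
  · exact Or.inl hrec
  simp only [IsFractRecord, not_forall, not_lt] at hrec
  obtain ⟨s, hs0, hsp, hle⟩ := hrec
  have h2s : 2 * s = p := by
    by_contra h2s
    exact (h.fract_lt hp hs0 hsp h2s).not_ge hle
  exact Or.inr ⟨s, h2s.symm, fun x hx0 hxp hxs =>
    hle.trans_lt (h.fract_lt hp hx0 hxp (by omega))⟩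

end AvoidsLowerHalf

/-- The coordinates `(u, v)` of `(x, y)` in the basis `(X, g), (Y, h)` are integers because the
determinant is `1`; as `xγ - y` is positive on the first vector and negative on the second, a
positive value at `0 < x < X + Y` forces `u ≥ 1` and `v ≤ 0`. -/
theorem lt_sub_of_det_eq_one {γ : ℝ} {X Y x : ℕ} {g h y : ℤ} (hdet : (X : ℤ) * h - Y * g = 1)
    (hX : 0 < X * γ - g) (hY : Y * γ - h < 0) (hx0 : 0 < x) (hxXY : x < X + Y) (hxX : x ≠ X)
    (hxy : 0 < x * γ - y) : X * γ - g < x * γ - y := by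
  set u : ℤ := x * h - Y * y
  set v : ℤ := X * y - g * x
  have hxuv : (x : ℤ) = u * X + v * Y := by linear_combination (-(x : ℤ)) * hdet
  have hyuv : y = u * g + v * h := by linear_combination (-y) * hdet
  have hform : (x : ℝ) * γ - y = u * (X * γ - g) + v * (Y * γ - h) := by
    have hx := congrArg (Int.cast : ℤ → ℝ) hxuv
    have hy := congrArg (Int.cast : ℤ → ℝ) hyuv
    push_cast at hx hy
    rw [hx, hy]
    ring
  rw [hform]
  rcases le_or_gt u 0 with hu | hu <;> rcases le_or_gt v 0 with hv | hv
  · have : (x : ℤ) ≤ 0 := by rw [hxuv]; nlinarith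
    omega
  · have hu' : (u : ℝ) ≤ 0 := by exact_mod_cast hu
    have hv' : (0 : ℝ) < v := by exact_mod_cast hv
    nlinarith
  · have huv : 2 ≤ u ∨ v ≤ -1 := by
      by_contra! huv
      have hu1 : u = 1 := by omega
      have hv0 : v = 0 := by omega
      rw [hu1, hv0] at hxuv
      exact hxX (by omega)
    rcases huv with hu2 | hv1
    · have hu' : (2 : ℝ) ≤ u := by exact_mod_cast hu2
      have hv' : (v : ℝ) ≤ 0 := by exact_mod_cast hv
      nlinarith
    · have hu' : (1 : ℝ) ≤ u := by exact_mod_cast hu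
      have hv' : (v : ℝ) ≤ -1 := by exact_mod_cast hv1
      nlinarith
  · have : (X : ℤ) + Y ≤ x := by rw [hxuv]; nlinarith
    omega

/-- The records of `x ↦ fract (x * altInv α m)` turn out to be the intermediate numerators
`CF.num m' k` with `m' ≡ m [MOD 2]`. -/
noncomputable def altInv (α : ℝ) (m : ℕ) : ℝ := (-1) ^ (m + 1) / α

theorem altInv_add_two_mul (α : ℝ) (m j : ℕ) : altInv α (m + 2 * j) = altInv α m := by
  simp [altInv, pow_add, pow_mul]

theorem Irrational.altInv {α : ℝ} (hirr : Irrational α) (m : ℕ) : Irrational (altInv α m) := by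
  rw [_root_.altInv, div_eq_mul_inv]
  exact_mod_cast hirr.inv.intCast_mul (pow_ne_zero _ (by norm_num : (-1 : ℤ) ≠ 0))

theorem natCast_mul_altInv_one (α : ℝ) (n : ℕ) : (n : ℝ) * altInv α 1 = n / α := by
  simp [altInv, div_eq_mul_inv]

theorem natCast_mul_altInv_zero (α : ℝ) (n : ℕ) : (n : ℝ) * altInv α 0 = -(n / α) := by
  simp [altInv, div_eq_mul_inv]

theorem avoidsLowerHalf_of_Bset {α : ℝ} (hα : 0 < α) (hirr : Irrational α) {p : ℕ}
    (hB : ∀ x ∈ Bset α, ∀ y ∈ Bset α, x ≠ y → x + y ≠ p) : AvoidsLowerHalf (altInv α 1) p := by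
  have hmem : ∀ n : ℕ, 0 < n → Int.fract (n * altInv α 1) < 1 / 2 → n ∈ Bset α :=
    fun n hn h => mem_Bset_of_fract_lt hα hn (hirr.natCast_div hn.ne')
      (natCast_mul_altInv_one α n ▸ h)
  exact fun x y hx hy hxy hsum ⟨h₁, h₂⟩ => hB x (hmem x hx h₁) y (hmem y hy h₂) hxy hsum

theorem avoidsLowerHalf_of_Aset {α : ℝ} (hα : 0 < α) (hirr : Irrational α) {p : ℕ}
    (hA : ∀ x ∈ Aset α, ∀ y ∈ Aset α, x ≠ y → x + y ≠ p) : AvoidsLowerHalf (altInv α 0) p := by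
  have hmem : ∀ n : ℕ, 0 < n → Int.fract (n * altInv α 0) < 1 / 2 → n ∈ Aset α :=
    fun n hn h => mem_Aset_of_fract_neg_lt hα hn (hirr.natCast_div hn.ne')
      (natCast_mul_altInv_zero α n ▸ h)
  exact fun x y hx hy hxy hsum ⟨h₁, h₂⟩ => hA x (hmem x hx h₁) y (hmem y hy h₂) hxy hsum

namespace CF

variable {α : ℝ} (c : CF α)

/-- The denominators extended like `CF.P`: `Q 0 = q_{-2} = 1`, `Q 1 = q_{-1} = 0`. -/
def Q : ℕ → ℕ
  | 0 => 1
  | 1 => 0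
  | n + 2 => c.q n

theorem P_add_two (m : ℕ) : c.P (m + 2) = c.a m * c.P (m + 1) + c.P m := by
  match m with
  | 0 => simp [CF.P, c.p0]
  | 1 => simp [CF.P, c.p1, c.p0]
  | n + 2 => exact c.p_rec n

theorem Q_add_two (m : ℕ) : c.Q (m + 2) = c.a m * c.Q (m + 1) + c.Q m := by
  match m with
  | 0 => simp [CF.Q, c.q0]
  | 1 => simp [CF.Q, c.q1, c.q0]
  | n + 2 => exact c.q_rec n

theorem P_succ_pos (m : ℕ) : 0 < c.P (m + 1) := by
  induction m with
  | zero => simp [CF.P]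
  | succ m ih =>
    rw [P_add_two]
    exact Nat.add_pos_left (Nat.mul_pos (c.ha m) ih) _

theorem P_mul_Q_sub (m : ℕ) :
    (c.P m : ℤ) * c.Q (m + 1) - c.P (m + 1) * c.Q m = (-1) ^ (m + 1) := by
  induction m with
  | zero => simp [CF.P, CF.Q]
  | succ m ih =>
    rw [P_add_two, Q_add_two, pow_succ, ← ih]
    push_cast
    ring

theorem t_pos_irrational (hα : 1 < α) (hirr : Irrational α) (m : ℕ) :
    0 < c.t m ∧ Irrational (c.t m) := by
  induction m with
  | zero => rw [c.t0]; exact ⟨by linarith, hirr⟩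
  | succ m ih =>
    have hfract : (c.t (m + 1))⁻¹ = Int.fract (c.t m) := by
      rw [← Int.self_sub_floor, ← c.floor_t, c.t_rec m]
      ring
    have hirr' : Irrational (c.t (m + 1))⁻¹ := hfract ▸ ih.2.sub_intCast _
    exact ⟨inv_pos.1 (hfract ▸ ih.2.fract_pos), hirr'.of_inv⟩

/-- `|p_{m-2}/α - q_{m-2}|`: the sign `(-1)^(m+1)` is that of `p_{m-2}/α - q_{m-2}`. -/
noncomputable def err (m : ℕ) : ℝ := (-1) ^ (m + 1) * (c.P m / α - c.Q m)

theorem err_add_two (m : ℕ) : c.err (m + 2) = c.err m - c.a m * c.err (m + 1) := by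
  simp only [err, P_add_two, Q_add_two, pow_succ]
  push_cast
  ring

theorem err_succ (hα : 1 < α) (hirr : Irrational α) (m : ℕ) :
    c.err (m + 1) = c.err m / c.t m := by
  induction m with
  | zero => simp [err, CF.P, CF.Q, c.t0]
  | succ m ih =>
    have ht := (c.t_pos_irrational hα hirr m).1.ne'
    have hprev : c.err m = c.t m * c.err (m + 1) := by rw [ih]; field_simp
    have hfrac : c.t m - c.a m = 1 / c.t (m + 1) := by rw [c.t_rec m]; ring
    calc c.err (m + 2) = (c.t m - c.a m) * c.err (m + 1) := by rw [err_add_two, hprev]; ring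
      _ = c.err (m + 1) / c.t (m + 1) := by rw [hfrac]; ring

theorem err_pos (hα : 1 < α) (hirr : Irrational α) (m : ℕ) : 0 < c.err m := by
  induction m with
  | zero => simp [err, CF.P, CF.Q]
  | succ m ih =>
    rw [c.err_succ hα hirr]
    exact div_pos ih (c.t_pos_irrational hα hirr m).1

/-- The numerator `p_{m-2} + k p_{m-1}` of an intermediate fraction. -/
def num (m k : ℕ) : ℕ := c.P m + k * c.P (m + 1)

theorem num_succ (m k : ℕ) : c.num m (k + 1) = c.num m k + c.P (m + 1) := by
  simp only [num]
  ring

theorem num_a (m : ℕ) : c.num m (c.a m) = c.num (m + 2) 0 := by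
  simp [num, P_add_two, add_comm]

theorem num_pos_of_lt_num_succ {m k x : ℕ} (hx0 : 0 < x) (hx : x < c.num m (k + 1)) :
    0 < c.num m k := by
  rcases m with _ | m
  · simp only [num, CF.P] at hx ⊢
    omega
  · exact (c.P_succ_pos m).trans_le (Nat.le_add_right _ _)

theorem fract_num_lt (hα : 1 < α) (hirr : Irrational α) {m k x : ℕ} (hk : k ≤ c.a m)
    (hx0 : 0 < x) (hx : x < c.num m (k + 1)) (hxk : x ≠ c.num m k) :
    Int.fract (c.num m k * altInv α m) < Int.fract (x * altInv α m) := by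
  set σ : ℤ := (-1) ^ (m + 1)
  have hσ : σ * σ = 1 := by simp [σ, ← pow_add, ← two_mul, pow_mul]
  have hdet : (c.num m k : ℤ) * (σ * c.Q (m + 1)) - c.P (m + 1) * (σ * (c.Q m + k * c.Q (m + 1)))
      = 1 := by
    have h := c.P_mul_Q_sub m
    rw [show ((-1 : ℤ) ^ (m + 1)) = σ from rfl] at h
    simp only [num]
    push_cast
    linear_combination σ * h + hσ
  have hnum : (c.num m k : ℝ) * altInv α m - ((σ * (c.Q m + k * c.Q (m + 1)) : ℤ) : ℝ)
      = c.err m - k * c.err (m + 1) := by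
    simp only [num, altInv, err, σ]
    push_cast
    ring
  have hP : (c.P (m + 1) : ℝ) * altInv α m - ((σ * c.Q (m + 1) : ℤ) : ℝ) = -c.err (m + 1) := by
    simp only [altInv, err, σ]
    push_cast
    ring
  have hpos : 0 < c.err m - k * c.err (m + 1) := by
    have hka : (k : ℝ) ≤ c.a m := by exact_mod_cast hk
    have := c.err_add_two m
    nlinarith [c.err_pos hα hirr (m + 1), c.err_pos hα hirr (m + 2)]
  have hxirr : Irrational (x * altInv α m) := (hirr.altInv m).natCast_mul hx0.ne'
  calc Int.fract (c.num m k * altInv α m)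
      ≤ c.num m k * altInv α m - ((σ * (c.Q m + k * c.Q (m + 1)) : ℤ) : ℝ) :=
        Int.fract_le_sub_of_le (by linarith)
    _ < x * altInv α m - ⌊x * altInv α m⌋ :=
        lt_sub_of_det_eq_one hdet (hnum ▸ hpos) (by linarith [c.err_pos hα hirr (m + 1)]) hx0
          (c.num_succ m k ▸ hx) hxk (by rw [Int.self_sub_floor]; exact hxirr.fract_pos)
    _ = Int.fract (x * altInv α m) := Int.self_sub_floor _

theorem exists_num_le_lt (m₀ : ℕ) {p : ℕ} (hp : c.P m₀ ≤ p) :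
    ∃ j k, k < c.a (m₀ + 2 * j) ∧ c.num (m₀ + 2 * j) k ≤ p ∧ p < c.num (m₀ + 2 * j) (k + 1) := by
  induction p, hp using Nat.le_induction with
  | base => exact ⟨0, 0, c.ha _, by simp [num], by simp [num, c.P_succ_pos]⟩
  | succ p _ ih =>
    obtain ⟨j, k, hk, hle, hlt⟩ := ih
    rcases (Nat.succ_le_of_lt hlt).lt_or_eq with hlt' | heq
    · exact ⟨j, k, hk, by omega, hlt'⟩
    rcases (Nat.succ_le_of_lt hk).lt_or_eq with hk' | hka
    · refine ⟨j, k + 1, hk', heq.ge, ?_⟩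
      rw [c.num_succ _ (k + 1), ← heq]
      linarith [c.P_succ_pos (m₀ + 2 * j)]
    · have hnext : c.num (m₀ + 2 * (j + 1)) 0 = p + 1 := by
        rw [show m₀ + 2 * (j + 1) = m₀ + 2 * j + 2 by ring, ← c.num_a, ← hka]
        exact heq.symm
      refine ⟨j + 1, 0, c.ha _, hnext.le, ?_⟩
      rw [c.num_succ, hnext]
      linarith [c.P_succ_pos (m₀ + 2 * (j + 1))]

theorem exists_eq_num_of_isFractRecord (hα : 1 < α) (hirr : Irrational α) {m₀ p : ℕ}
    (hp : 0 < p) (hPp : c.P m₀ ≤ p) (hrec : IsFractRecord (altInv α m₀) p) :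
    ∃ j k, k < c.a (m₀ + 2 * j) ∧ p = c.num (m₀ + 2 * j) k := by
  obtain ⟨j, k, hk, hle, hlt⟩ := c.exists_num_le_lt m₀ hPp
  refine ⟨j, k, hk, ?_⟩
  by_contra hne
  rw [← altInv_add_two_mul α m₀ j] at hrec
  exact lt_asymm (c.fract_num_lt hα hirr hk.le hp hlt hne)
    (hrec _ (c.num_pos_of_lt_num_succ hp hlt) (lt_of_le_of_ne hle (Ne.symm hne)))

theorem num_eq_one_or_p {m k : ℕ} (hpos : 0 < c.num m k)
    (hle : 2 * c.num m k ≤ c.num m (k + 1)) : c.num m k = 1 ∨ ∃ n, c.num m k = c.p n := by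
  rw [num_succ] at hle
  rcases m with _ | _ | n
  · simp only [num, CF.P] at hpos hle ⊢
    omega
  · left
    have : 1 ≤ c.p 0 := c.p0 ▸ c.ha 0
    rcases k with _ | k
    · simp [num, CF.P]
    · simp only [num, CF.P] at hle
      nlinarith
  · right
    refine ⟨n, ?_⟩
    have := c.P_succ_pos (n + 1)
    have : k = 0 := by by_contra hk; simp only [num] at hle; nlinarith [Nat.pos_of_ne_zero hk]
    simp [num, this, CF.P]

theorem eq_one_or_p_of_fract_lt_below_two_mul (hα : 1 < α) (hirr : Irrational α) {m₀ s : ℕ}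
    (hs : 0 < s) (hPs : c.P m₀ ≤ s)
    (hrec : ∀ x : ℕ, 0 < x → x < 2 * s → x ≠ s →
      Int.fract (s * altInv α m₀) < Int.fract (x * altInv α m₀)) :
    s = 1 ∨ ∃ n, s = c.p n := by
  obtain ⟨j, k, hk, rfl⟩ := c.exists_eq_num_of_isFractRecord hα hirr hs hPs
    fun x hx0 hxs => hrec x hx0 (by omega) (by omega)
  rw [← altInv_add_two_mul α m₀ j] at hrec
  refine c.num_eq_one_or_p hs (not_lt.1 fun hlt => ?_)
  have hP := c.P_succ_pos (m₀ + 2 * j)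
  have hnext := c.num_succ (m₀ + 2 * j) k
  exact lt_asymm (c.fract_num_lt hα hirr (k := k + 1) hk hs (by rw [c.num_succ]; omega)
    (by omega)) (hrec _ (by omega) hlt (by omega))

def IsSpecial (p : ℕ) : Prop :=
  (∃ n, p = c.p n) ∨ (∃ n, p = 2 * c.p n) ∨
    ∃ m k, 0 < k ∧ k < c.a m ∧ p = c.P m + k * c.P (m + 1)

theorem isSpecial_one : c.IsSpecial 1 := by
  rcases (c.ha 0).lt_or_eq with h | h
  · exact Or.inr (Or.inr ⟨0, 1, one_pos, h, by simp [CF.P]⟩)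
  · exact Or.inl ⟨0, by rw [c.p0, ← h]⟩

theorem isSpecial_two : c.IsSpecial 2 := by
  rcases (c.ha 0).lt_or_eq with h | h
  · rcases (Nat.succ_le_of_lt h).lt_or_eq with h2 | h2
    · exact Or.inr (Or.inr ⟨0, 2, two_pos, h2, by simp [CF.P]⟩)
    · exact Or.inl ⟨0, by rw [c.p0, ← h2]⟩
  · exact Or.inr (Or.inl ⟨0, by rw [c.p0, ← h]⟩)

theorem isSpecial_num {m k : ℕ} (hk : k < c.a m) (hpos : 0 < c.num m k) :
    c.IsSpecial (c.num m k) := by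
  rcases Nat.eq_zero_or_pos k with rfl | hk0
  · rcases m with _ | _ | n
    · simp [num, CF.P] at hpos
    · simpa [num, CF.P] using c.isSpecial_one
    · exact Or.inl ⟨n, by simp [num, CF.P]⟩
  · exact Or.inr (Or.inr ⟨m, k, hk0, hk, rfl⟩)

theorem isSpecial_of_avoidsLowerHalf (hα : 1 < α) (hirr : Irrational α) {m₀ p : ℕ}
    (hm₀ : m₀ ≤ 1) (hp : 0 < p) (h : AvoidsLowerHalf (altInv α m₀) p)
    (hhalf : Int.fract (p * altInv α m₀) < 1 / 2) : c.IsSpecial p := by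
  have hP₀ : c.P m₀ ≤ 1 := by interval_cases m₀ <;> simp [CF.P]
  have hP : ∀ x, 0 < x → c.P m₀ ≤ x := fun x hx => by omega
  rcases h.isFractRecord_or_double hhalf with hrec | ⟨s, rfl, hrec⟩
  · obtain ⟨j, k, hk, rfl⟩ := c.exists_eq_num_of_isFractRecord hα hirr hp (hP _ hp) hrec
    exact c.isSpecial_num hk hp
  · rcases c.eq_one_or_p_of_fract_lt_below_two_mul hα hirr (by omega) (hP s (by omega)) hrec with
      rfl | ⟨n, rfl⟩
    · exact c.isSpecial_two
    · exact Or.inr (Or.inl ⟨n, rfl⟩)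

end CF

/-- Every element of `S_α` is a convergent numerator, twice a convergent
numerator, or the numerator `p_{n-1} + k * p_n` (`0 < k < a_{n+1}`) of an
intermediate fraction; in extended indexing, intermediate numerators are
`c.P m + k * c.P (m+1)` with `0 < k < c.a m`. -/
theorem stmt9 (α : ℝ) (hα : 1 < α) (hirr : Irrational α) (c : CF α)
    (p : ℕ) (hp : p ∈ Sset α) :
    (∃ n, p = c.p n) ∨ (∃ n, p = 2 * c.p n) ∨
    (∃ m k, 0 < k ∧ k < c.a m ∧ p = c.P m + k * c.P (m + 1)) := by
  obtain ⟨hp0, hA, hB⟩ := hp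
  have hα0 : 0 < α := by linarith
  have hirr' : Irrational (p / α) := hirr.natCast_div hp0.ne'
  have hhalf : Int.fract ((p : ℝ) / α) ≠ 1 / 2 := fun h =>
    hirr' ⟨⌊(p : ℝ) / α⌋ + 1 / 2, by push_cast; linarith [Int.self_sub_floor ((p : ℝ) / α)]⟩
  rcases hhalf.lt_or_gt with hlt | hgt
  · exact c.isSpecial_of_avoidsLowerHalf hα hirr le_rfl hp0 (avoidsLowerHalf_of_Bset hα0 hirr hB)
      (by rwa [natCast_mul_altInv_one])
  · refine c.isSpecial_of_avoidsLowerHalf hα hirr zero_le_one hp0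
      (avoidsLowerHalf_of_Aset hα0 hirr hA) ?_
    rw [natCast_mul_altInv_zero, Int.fract_neg hirr'.fract_pos.ne']
    linarith
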